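/- Let A be a σ-unital C*-algebra with countable approximate unit (eₙ). For any strictly separable subset X of the multiplier algebra M(A), there exists a nondegenerate separable C*-subalgebra B ⊆ A such that every element of X is a multiplier of B; explicitly, the C*-subalgebra B generated by { x eₙ : n ∈ ℕ, x ∈ X ∪ X* ∪ {1} } is separable, contains the approximate unit (eₙ) (hence is nondegenerate in A), and satisfies xB ⊆ B and Bx ⊆ B for all x ∈ X. -/

import Mathlib

open scoped MultiplierAlgebra
open Filter

/-- Strict convergence of a sequence in the multiplier algebra `𝓜(ℂ, A)`. -/
def StrictTendsto {A : Type*} [NonUnitalCStarAlgebra A]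
    (s : ℕ → 𝓜(ℂ, A)) (T : 𝓜(ℂ, A)) : Prop :=
  ∀ a : A, Tendsto (fun n => ‖(s n - T) * (a : 𝓜(ℂ, A))‖) atTop (nhds 0) ∧
    Tendsto (fun n => ‖(a : 𝓜(ℂ, A)) * (s n - T)‖) atTop (nhds 0)

/-- A countable approximate unit of positive contractions (σ-unitality witness). -/
def IsApproxUnit {A : Type*} [NonUnitalCStarAlgebra A] (e : ℕ → A) : Prop :=
  (∀ n, (∃ b, e n = star b * b) ∧ ‖e n‖ ≤ 1) ∧
  ∀ x : A, Tendsto (fun n => ‖e n * x - x‖) atTop (nhds 0) ∧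
    Tendsto (fun n => ‖x * e n - x‖) atTop (nhds 0)

open Topology TopologicalSpace

/-!
Every generator `x eₙ` is a multiplier applied to an element of `A`, hence lies in `A`, and `A` is
closed in `𝓜(ℂ, A)`; so `B ⊆ A`. If `xₖ → x` strictly, then `xₖ eₙ → x eₙ` in norm, so the
generators lie in the norm closure of the countable set `{d eₙ : d ∈ D ∪ D* ∪ {1}}`, which gives
separability. Finally, for `b ∈ B ⊆ A` we have `x b = lim (x eₙ) b` and `b x = lim b (eₙ x)` with
`eₙ x = (x* eₙ)*`, and all these approximants lie in the closed star algebra `B`.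
-/

theorem Set.Countable.submonoidClosure {M : Type*} [Monoid M] {s : Set M} (hs : s.Countable) :
    (Submonoid.closure s : Set M).Countable := by
  have := hs.to_subtype
  rw [Submonoid.closure_eq_mrange, MonoidHom.coe_mrange]
  exact Set.countable_range _

theorem isSeparable_adjoin_of_countable {E : Type*} [NormedRing E] [StarRing E]
    [NormedAlgebra ℂ E] [StarModule ℂ E] {t : Set E} (ht : t.Countable) :
    IsSeparable (NonUnitalStarAlgebra.adjoin ℂ t : Set E) := by
  have hclosure : (Subsemigroup.closure (t ∪ star t) : Set E) ⊆ Submonoid.closure (t ∪ star t) :=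
    Subsemigroup.closure_le.2 Submonoid.subset_closure
  have hgen : (t ∪ star t).Countable := ht.union (by simpa using ht.image star)
  change IsSeparable ((NonUnitalStarAlgebra.adjoin ℂ t).toSubmodule : Set E)
  rw [NonUnitalStarAlgebra.adjoin_eq_span]
  exact (hgen.submonoidClosure.isSeparable.mono hclosure).span

theorem isSeparable_closure_adjoin {E : Type*} [NormedRing E] [StarRing E] [NormedStarGroup E]
    [NormedAlgebra ℂ E] [StarModule ℂ E] {s t : Set E} (ht : t.Countable) (hst : s ⊆ closure t) :
    IsSeparable (closure (NonUnitalStarAlgebra.adjoin ℂ s : Set E)) := by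
  have hsub :
      NonUnitalStarAlgebra.adjoin ℂ s ≤ (NonUnitalStarAlgebra.adjoin ℂ t).topologicalClosure :=
    NonUnitalStarAlgebra.adjoin_le <|
      hst.trans (closure_mono (NonUnitalStarAlgebra.subset_adjoin ℂ t))
  exact ((isSeparable_adjoin_of_countable ht).closure.mono
    (closure_minimal hsub isClosed_closure))

theorem CStarRing.eq_of_forall_mul_left_eq {E : Type*} [NonUnitalNormedRing E] [StarRing E]
    [CStarRing E] {x y : E} (h : ∀ c, c * x = c * y) : x = y := by
  have hzero : star (x - y) * (x - y) = 0 := by rw [mul_sub, h, sub_self]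
  exact sub_eq_zero.1 (CStarRing.star_mul_self_eq_zero_iff _ |>.1 hzero)

namespace DoubleCentralizer

variable {A : Type*} [NonUnitalCStarAlgebra A]

theorem norm_coe (a : A) : ‖(a : 𝓜(ℂ, A))‖ = ‖a‖ := by
  rw [← norm_fst, coe_fst, ContinuousLinearMap.opNorm_mul_apply]

theorem coe_mul (a b : A) : ((a * b : A) : 𝓜(ℂ, A)) = a * b :=
  map_mul (coeHom (𝕜 := ℂ) (A := A)) a b

theorem coe_star (a : A) : ((star a : A) : 𝓜(ℂ, A)) = star (a : 𝓜(ℂ, A)) :=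
  map_star (coeHom (𝕜 := ℂ) (A := A)) a

theorem isometry_coe : Isometry (fun a : A => (a : 𝓜(ℂ, A))) :=
  AddMonoidHomClass.isometry_of_norm (coeHom (𝕜 := ℂ) (A := A)) norm_coe

theorem isClosed_range_coe : IsClosed (Set.range (fun a : A => (a : 𝓜(ℂ, A)))) :=
  isometry_coe.isClosedEmbedding.isClosed_range

theorem mul_coe_eq_coe_fst (x : 𝓜(ℂ, A)) (a : A) : x * (a : 𝓜(ℂ, A)) = (x.fst a : 𝓜(ℂ, A)) := by
  refine ext ℂ A _ _ (Prod.ext (ContinuousLinearMap.ext fun b => ?_)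
    (ContinuousLinearMap.ext fun c => x.central c a))
  change x.fst (a * b) = x.fst a * b
  refine CStarRing.eq_of_forall_mul_left_eq fun c => ?_
  rw [← x.central, ← mul_assoc, x.central, mul_assoc]

theorem closure_adjoin_subset_range_coe {S : Set 𝓜(ℂ, A)}
    (hS : S ⊆ Set.range (fun a : A => (a : 𝓜(ℂ, A)))) :
    closure (NonUnitalStarAlgebra.adjoin ℂ S : Set 𝓜(ℂ, A)) ⊆
      Set.range (fun a : A => (a : 𝓜(ℂ, A))) :=
  closure_minimal
    (NonUnitalStarAlgebra.adjoin_le (S := NonUnitalStarAlgHom.range (coeHom (𝕜 := ℂ) (A := A))) hS)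
    isClosed_range_coe

end DoubleCentralizer

section Multipliers

variable {A : Type*} [NonUnitalCStarAlgebra A]

open DoubleCentralizer

theorem strictTendsto_const (x : 𝓜(ℂ, A)) : StrictTendsto (fun _ => x) x := fun a => by
  simp only [sub_self, zero_mul, mul_zero, norm_zero]
  exact ⟨tendsto_const_nhds, tendsto_const_nhds⟩

namespace StrictTendsto

variable {s : ℕ → 𝓜(ℂ, A)} {x : 𝓜(ℂ, A)}

theorem star (h : StrictTendsto s x) : StrictTendsto (fun n => star (s n)) (star x) := fun a => by
  have hleft (y : 𝓜(ℂ, A)) : Star.star y * a = Star.star ((Star.star a : A) * y) := by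
    rw [coe_star, star_mul, star_star]
  have hright (y : 𝓜(ℂ, A)) : a * Star.star y = Star.star (y * (Star.star a : A)) := by
    rw [coe_star, star_mul, star_star]
  simp only [← star_sub, hleft, hright, norm_star]
  exact ⟨(h (Star.star a)).2, (h (Star.star a)).1⟩

theorem tendsto_mul_coe (h : StrictTendsto s x) (a : A) :
    Tendsto (fun n => s n * (a : 𝓜(ℂ, A))) atTop (𝓝 (x * a)) :=
  tendsto_iff_norm_sub_tendsto_zero.2 (by simpa only [sub_mul] using (h a).1)

theorem mul_coe_mem_closure {D : Set 𝓜(ℂ, A)} (h : StrictTendsto s x) (hs : ∀ n, s n ∈ D)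
    (a : A) : x * (a : 𝓜(ℂ, A)) ∈ closure ((· * (a : 𝓜(ℂ, A))) '' D) :=
  mem_closure_of_tendsto (h.tendsto_mul_coe a) (Eventually.of_forall fun n => ⟨s n, hs n, rfl⟩)

end StrictTendsto

theorem exists_strictTendsto_of_mem_union_star_one {X D : Set 𝓜(ℂ, A)}
    (hD : ∀ x ∈ X, ∃ s : ℕ → 𝓜(ℂ, A), (∀ n, s n ∈ D) ∧ StrictTendsto s x) :
    ∀ x ∈ X ∪ star '' X ∪ {1}, ∃ s : ℕ → 𝓜(ℂ, A),
      (∀ n, s n ∈ D ∪ star '' D ∪ {1}) ∧ StrictTendsto s x := by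
  rintro _ ((hx | ⟨x, hx, rfl⟩) | rfl)
  · obtain ⟨s, hs, hsx⟩ := hD _ hx
    exact ⟨s, fun n => Or.inl (Or.inl (hs n)), hsx⟩
  · obtain ⟨s, hs, hsx⟩ := hD x hx
    exact ⟨fun n => star (s n), fun n => Or.inl (Or.inr ⟨s n, hs n, rfl⟩), hsx.star⟩
  · exact ⟨fun _ => 1, fun _ => Or.inr rfl, strictTendsto_const 1⟩

namespace IsApproxUnit

variable {e : ℕ → A} (he : IsApproxUnit e)
include he

theorem isSelfAdjoint_coe (n : ℕ) : IsSelfAdjoint (e n : 𝓜(ℂ, A)) := by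
  obtain ⟨⟨b, hb⟩, -⟩ := he.1 n
  rw [hb]
  exact (IsSelfAdjoint.star_mul_self b).map (coeHom (𝕜 := ℂ) (A := A))

theorem tendsto_coe_mul (a : A) :
    Tendsto (fun n => (e n : 𝓜(ℂ, A)) * a) atTop (𝓝 (a : 𝓜(ℂ, A))) := by
  simp only [← coe_mul]
  exact isometry_coe.continuous.tendsto a |>.comp
    (tendsto_iff_norm_sub_tendsto_zero.2 (he.2 a).1)

theorem tendsto_mul_coe (a : A) :
    Tendsto (fun n => (a : 𝓜(ℂ, A)) * e n) atTop (𝓝 (a : 𝓜(ℂ, A))) := by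
  simp only [← coe_mul]
  exact isometry_coe.continuous.tendsto a |>.comp
    (tendsto_iff_norm_sub_tendsto_zero.2 (he.2 a).2)

variable {S : Type*} [SetLike S 𝓜(ℂ, A)] [MulMemClass S 𝓜(ℂ, A)] {C : S}
  (hC : IsClosed (C : Set 𝓜(ℂ, A))) {x : 𝓜(ℂ, A)} {a : A} (ha : (a : 𝓜(ℂ, A)) ∈ C)
include hC ha

theorem mul_mem_of_forall_mul_coe_mem (hx : ∀ n, x * e n ∈ C) : x * a ∈ C :=
  hC.mem_of_tendsto ((he.tendsto_coe_mul a).const_mul x)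
    (Eventually.of_forall fun n => by rw [← mul_assoc]; exact mul_mem (hx n) ha)

theorem mul_mem_of_forall_coe_mul_mem (hx : ∀ n, (e n : 𝓜(ℂ, A)) * x ∈ C) : a * x ∈ C :=
  hC.mem_of_tendsto ((he.tendsto_mul_coe a).mul_const x)
    (Eventually.of_forall fun n => by rw [mul_assoc]; exact mul_mem ha (hx n))

end IsApproxUnit

end Multipliers

/-- If `A` is σ-unital with approximate unit `(eₙ)` and `X ⊆ 𝓜(ℂ, A)` is strictly
separable, then the C*-subalgebra `B` generated by `{x eₙ : x ∈ X ∪ X* ∪ {1}}` is a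
(norm-)separable nondegenerate subalgebra of `A` containing the approximate unit, and
every element of `X` multiplies `B` into itself. -/
theorem separable_exhaustion_multipliers {A : Type*} [NonUnitalCStarAlgebra A]
    (e : ℕ → A) (he : IsApproxUnit e)
    (X : Set 𝓜(ℂ, A))
    (hXsep : ∃ D : Set 𝓜(ℂ, A), D.Countable ∧ ∀ x ∈ X, ∃ s : ℕ → 𝓜(ℂ, A),
      (∀ n, s n ∈ D) ∧ StrictTendsto s x)
    (B : Set 𝓜(ℂ, A))
    (hB : B = closure (NonUnitalStarAlgebra.adjoin ℂ
      {y : 𝓜(ℂ, A) | ∃ x ∈ X ∪ (star '' X) ∪ {1}, ∃ n : ℕ, y = x * (e n : 𝓜(ℂ, A))} :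
        Set 𝓜(ℂ, A))) :
    B ⊆ Set.range (fun a : A => (a : 𝓜(ℂ, A))) ∧
    TopologicalSpace.IsSeparable B ∧
    (∀ n, (e n : 𝓜(ℂ, A)) ∈ B) ∧
    ∀ x ∈ X, ∀ b ∈ B, x * b ∈ B ∧ b * x ∈ B := by
  obtain ⟨D, hDc, hD⟩ := hXsep
  set G := X ∪ star '' X ∪ {1}
  set S : Set 𝓜(ℂ, A) := {y | ∃ x ∈ G, ∃ n : ℕ, y = x * (e n : 𝓜(ℂ, A))}
  set C := (NonUnitalStarAlgebra.adjoin ℂ S).topologicalClosure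
  have hBC : B = C := hB
  subst hBC
  have hgen (x : 𝓜(ℂ, A)) (hx : x ∈ G) (n : ℕ) : x * (e n : 𝓜(ℂ, A)) ∈ C :=
    subset_closure (NonUnitalStarAlgebra.subset_adjoin ℂ S ⟨x, hx, n, rfl⟩)
  have hrange : (C : Set 𝓜(ℂ, A)) ⊆ Set.range (fun a : A => (a : 𝓜(ℂ, A))) :=
    DoubleCentralizer.closure_adjoin_subset_range_coe <| by
      rintro _ ⟨x, -, n, rfl⟩
      exact ⟨_, (DoubleCentralizer.mul_coe_eq_coe_fst x (e n)).symm⟩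
  refine ⟨hrange, ?_, fun n => by simpa using hgen 1 (Or.inr rfl) n, fun x hx b hb => ?_⟩
  · refine isSeparable_closure_adjoin
      (t := ⋃ n, (· * (e n : 𝓜(ℂ, A))) '' (D ∪ star '' D ∪ {1})) ?_ ?_
    · exact Set.countable_iUnion fun n =>
        ((hDc.union (hDc.image _)).union (Set.countable_singleton 1)).image _
    · rintro _ ⟨x, hx, n, rfl⟩
      obtain ⟨s, hs, hsx⟩ := exists_strictTendsto_of_mem_union_star_one hD x hx
      exact closure_mono (Set.subset_iUnion _ n) (hsx.mul_coe_mem_closure hs (e n))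
  · obtain ⟨a, rfl⟩ := hrange hb
    have hC : IsClosed (C : Set 𝓜(ℂ, A)) := isClosed_closure
    refine ⟨he.mul_mem_of_forall_mul_coe_mem hC hb (hgen x (Or.inl (Or.inl hx))),
      he.mul_mem_of_forall_coe_mul_mem hC hb fun n => ?_⟩
    have hstar : (e n : 𝓜(ℂ, A)) * x = star (star x * e n) := by
      rw [star_mul, star_star, (he.isSelfAdjoint_coe n).star_eq]
    exact hstar ▸ star_mem (hgen _ (Or.inl (Or.inr ⟨x, hx, rfl⟩)) n)
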